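/- arXiv:1911.10246 — 2 statements merged into one kernel-verified Lean document; each statement's English description precedes it below -/
import Mathlib

section
/- The variance of the efficient influence function λ(Z) equals E[ψ(Z)], where ψ(z) = ((1-g(x))/(1-ρ)²)·{ ((1-g(x))/g(x))·σ²(x) + (m(x)-θ)² } and σ²(x)=Var(Y|L=1,X=x). -/
open MeasureTheory ProbabilityTheory

lemma integrable_of_abs_bound {Ω : Type*} [MeasurableSpace Ω] {P : Measure Ω}
    [IsFiniteMeasure P] {f : Ω → ℝ} (hf : AEStronglyMeasurable f P) (C : ℝ)
    (h : ∀ᵐ ω ∂P, |f ω| ≤ C) : Integrable f P :=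
  (MemLp.of_bound hf C (by simpa [Real.norm_eq_abs] using h)).integrable le_rfl

lemma key_pullout {Ω 𝒳 : Type*} [MeasurableSpace Ω] [MeasurableSpace 𝒳]
    {P : Measure Ω} [IsProbabilityMeasure P] {X : Ω → 𝒳} (hX : Measurable X)
    {f k : 𝒳 → ℝ} {h : Ω → ℝ} (hf : Measurable f)
    (hh : Integrable h P) (hfh : Integrable (fun ω => f (X ω) * h ω) P)
    (hcond : P[h | MeasurableSpace.comap X inferInstance] =ᵐ[P] fun ω => k (X ω)) :
    ∫ ω, f (X ω) * h ω ∂P = ∫ ω, f (X ω) * k (X ω) ∂P := by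
  set mX := MeasurableSpace.comap X inferInstance with hmX
  have hm : mX ≤ _ := hX.comap_le
  haveI : SigmaFinite (P.trim hm) := by
    have : IsFiniteMeasure (P.trim hm) := isFiniteMeasure_trim hm
    infer_instance
  have hfsm : StronglyMeasurable[mX] (fun ω => f (X ω)) :=
    (hf.comp (Measurable.of_comap_le le_rfl)).stronglyMeasurable
  have h1 : ∫ ω, f (X ω) * h ω ∂P = ∫ ω, (P[(fun ω => f (X ω)) * h | mX]) ω ∂P :=
    (integral_condExp hm).symm
  have h2 : (P[(fun ω => f (X ω)) * h | mX]) =ᵐ[P] (fun ω => f (X ω)) * (P[h | mX]) :=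
    condExp_mul_of_stronglyMeasurable_left hfsm hfh hh
  have h3 : ((fun ω => f (X ω)) * (P[h | mX])) =ᵐ[P] fun ω => f (X ω) * k (X ω) := by
    filter_upwards [hcond] with ω hω
    simp [Pi.mul_apply, hω]
  rw [h1, integral_congr_ae h2, integral_congr_ae h3]

set_option maxHeartbeats 1000000 in
/-- The variance of the efficient influence function `λ(Z)` equals `E[ψ(Z)]`, where
`ψ(z) = ((1-g(x))/(1-ρ)²)·{((1-g(x))/g(x))·σ²(x) + (m(x)-θ)²}` and
`σ²(x) = Var(Y | L=1, X=x)`, the latter encoded by `g·σ² ∘ X` being a version of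
`E[L·(Y-m(X))² | σ(X)]`. -/
theorem eif_variance
    {Ω 𝒳 : Type*} [MeasurableSpace Ω] [MeasurableSpace 𝒳]
    (P : Measure Ω) [IsProbabilityMeasure P]
    (X : Ω → 𝒳) (L Y : Ω → ℝ) (g m σ2 : 𝒳 → ℝ)
    (hX : Measurable X) (hL : Measurable L) (hY : Measurable Y)
    (hg : Measurable g) (hmm : Measurable m) (hσ2 : Measurable σ2)
    (hLbin : ∀ ω, L ω = 0 ∨ L ω = 1) (hYbin : ∀ ω, Y ω = 0 ∨ Y ω = 1)
    (hmrange : ∀ x, 0 ≤ m x ∧ m x ≤ 1)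
    (ε : ℝ) (hε : 0 < ε) (hgrange : ∀ x, ε ≤ g x ∧ g x ≤ 1)
    (hgcond : P[L | MeasurableSpace.comap X inferInstance] =ᵐ[P] fun ω => g (X ω))
    (hmcond : P[(fun ω => L ω * Y ω) | MeasurableSpace.comap X inferInstance]
        =ᵐ[P] fun ω => g (X ω) * m (X ω))
    (hσcond : P[(fun ω => L ω * (Y ω - m (X ω)) ^ 2) | MeasurableSpace.comap X inferInstance]
        =ᵐ[P] fun ω => g (X ω) * σ2 (X ω))
    (ρ : ℝ) (hρ : ρ = (P {ω | L ω = 1}).toReal) (hρ0 : 0 < ρ) (hρ1 : ρ < 1)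
    (θ : ℝ)
    (hθ : θ * (P {ω | L ω = 0}).toReal = ∫ ω in {ω | L ω = 0}, m (X ω) ∂P) :
    variance
      (fun ω => (L ω / g (X ω)) * ((1 - g (X ω)) / (1 - ρ)) * (Y ω - m (X ω))
        + ((1 - L ω) / (1 - ρ)) * (m (X ω) - θ)) P
      = ∫ ω, ((1 - g (X ω)) / (1 - ρ) ^ 2)
          * (((1 - g (X ω)) / g (X ω)) * σ2 (X ω) + (m (X ω) - θ) ^ 2) ∂P := by
  -- basic facts
  have h1ρ : (0:ℝ) < 1 - ρ := by linarith
  have hgx : ∀ x, 0 < g x := fun x => lt_of_lt_of_le hε (hgrange x).1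
  have hL01 : ∀ ω, 0 ≤ L ω ∧ L ω ≤ 1 := by
    intro ω; rcases hLbin ω with h | h <;> rw [h] <;> norm_num
  have hym : ∀ ω, |Y ω - m (X ω)| ≤ 1 := by
    intro ω
    rcases hYbin ω with h | h <;> rw [h, abs_le] <;>
      constructor <;> linarith [(hmrange (X ω)).1, (hmrange (X ω)).2]
  have hmθ : ∀ x, |m x - θ| ≤ 1 + |θ| := by
    intro x
    rw [abs_le]
    constructor <;> [skip; skip] <;>
      cases' abs_cases θ with h h <;> cases' (hmrange x) with h1 h2 <;> linarith
  -- the influence function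
  set lam : Ω → ℝ := fun ω =>
      (L ω / g (X ω)) * ((1 - g (X ω)) / (1 - ρ)) * (Y ω - m (X ω))
        + ((1 - L ω) / (1 - ρ)) * (m (X ω) - θ) with hlam_def
  -- auxiliary functions
  set f3 : 𝒳 → ℝ := fun x => (1 - g x) / (g x * (1 - ρ)) with hf3_def
  set c1 : 𝒳 → ℝ := fun x => ((1 - g x) / g x) ^ 2 / (1 - ρ) ^ 2 with hc1_def
  set c2 : 𝒳 → ℝ := fun x => (m x - θ) ^ 2 / (1 - ρ) ^ 2 with hc2_def
  -- bounds on auxiliary functions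
  have hf3b : ∀ x, |f3 x| ≤ 1 / (ε * (1 - ρ)) := by
    intro x
    have h0 : 0 ≤ (1 - g x) / (g x * (1 - ρ)) :=
      div_nonneg (by linarith [(hgrange x).2]) (mul_pos (hgx x) h1ρ).le
    rw [hf3_def, abs_of_nonneg h0]
    exact div_le_div₀ zero_le_one (by linarith [(hgrange x).2, hgx x]) (by positivity)
      (mul_le_mul_of_nonneg_right (hgrange x).1 h1ρ.le)
  have hfrac : ∀ x, 0 ≤ (1 - g x) / g x ∧ (1 - g x) / g x ≤ 1 / ε := by
    intro x
    refine ⟨div_nonneg (by linarith [(hgrange x).2]) (hgx x).le, ?_⟩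
    exact div_le_div₀ zero_le_one (by linarith [(hgrange x).2, hgx x]) hε (hgrange x).1
  have hc1b : ∀ x, |c1 x| ≤ (1 / ε) ^ 2 / (1 - ρ) ^ 2 := by
    intro x
    rw [hc1_def, abs_of_nonneg (div_nonneg (sq_nonneg _) (sq_nonneg _))]
    exact div_le_div₀ (by positivity) (pow_le_pow_left₀ (hfrac x).1 (hfrac x).2 2)
      (by positivity) le_rfl
  have hmθ2 : ∀ x, (m x - θ) ^ 2 ≤ (1 + |θ|) ^ 2 := by
    intro x
    have h := abs_le.mp (hmθ x)
    exact sq_le_sq' (by linarith [abs_nonneg θ]) h.2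
  have hc2b : ∀ x, |c2 x| ≤ (1 + |θ|) ^ 2 / (1 - ρ) ^ 2 := by
    intro x
    rw [hc2_def, abs_of_nonneg (div_nonneg (sq_nonneg _) (sq_nonneg _))]
    exact div_le_div₀ (by positivity) (hmθ2 x) (by positivity) le_rfl
  -- measurability
  have hmlam : Measurable lam := by
    rw [hlam_def]; fun_prop
  have int_of : ∀ (u : Ω → ℝ) (C : ℝ), Measurable u → (∀ ω, |u ω| ≤ C) → Integrable u P :=
    fun u C hu hC => integrable_of_abs_bound hu.aestronglyMeasurable C (ae_of_all _ hC)
  -- bound on lam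
  have hlamb : ∀ ω, |lam ω| ≤ 1 / (ε * (1 - ρ)) + (1 + |θ|) / (1 - ρ) := by
    intro ω
    have hθ1 : (0:ℝ) ≤ (1 + |θ|) / (1 - ρ) := by positivity
    have hε1 : (0:ℝ) ≤ 1 / (ε * (1 - ρ)) := by positivity
    rcases hLbin ω with h | h
    · have : lam ω = ((1:ℝ) / (1 - ρ)) * (m (X ω) - θ) := by
        rw [hlam_def]; simp only [h]; ring
      rw [this, abs_mul, abs_of_nonneg (by positivity : (0:ℝ) ≤ 1 / (1-ρ))]
      have : 1 / (1 - ρ) * |m (X ω) - θ| ≤ 1 / (1 - ρ) * (1 + |θ|) := by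
        gcongr; exact hmθ (X ω)
      calc 1 / (1 - ρ) * |m (X ω) - θ| ≤ 1 / (1 - ρ) * (1 + |θ|) := this
        _ = (1 + |θ|) / (1 - ρ) := by ring
        _ ≤ _ := by linarith
    · have heq : lam ω = (1 / g (X ω)) * ((1 - g (X ω)) / (1 - ρ)) * (Y ω - m (X ω)) := by
        rw [hlam_def]; simp only [h]; ring
      have b1 : |1 / g (X ω)| ≤ 1 / ε := by
        rw [abs_of_pos (one_div_pos.mpr (hgx (X ω)))]
        exact div_le_div₀ zero_le_one le_rfl hε (hgrange (X ω)).1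
      have b2 : |(1 - g (X ω)) / (1 - ρ)| ≤ 1 / (1 - ρ) := by
        rw [abs_of_nonneg (div_nonneg (by linarith [(hgrange (X ω)).2]) h1ρ.le)]
        exact div_le_div₀ zero_le_one (by linarith [(hgrange (X ω)).2, hgx (X ω)]) h1ρ le_rfl
      rw [heq, abs_mul, abs_mul]
      calc |1 / g (X ω)| * |(1 - g (X ω)) / (1 - ρ)| * |Y ω - m (X ω)|
          ≤ (1 / ε) * (1 / (1 - ρ)) * 1 :=
            mul_le_mul (mul_le_mul b1 b2 (abs_nonneg _) (by positivity)) (hym ω)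
              (abs_nonneg _) (by positivity)
        _ = 1 / (ε * (1 - ρ)) := by rw [mul_one, div_mul_div_comm, one_mul]
        _ ≤ _ := by linarith
  -- mean zero
  have hLY1 : ∀ ω, |L ω * Y ω| ≤ 1 := by
    intro ω; rcases hLbin ω with h | h <;> rcases hYbin ω with h' | h' <;>
      simp [h, h']
  have hLYm : ∀ ω, |L ω * (Y ω - m (X ω)) ^ 2| ≤ 1 := by
    intro ω
    have h2 : (Y ω - m (X ω)) ^ 2 ≤ 1 := by
      nlinarith [sq_abs (Y ω - m (X ω)), hym ω, abs_nonneg (Y ω - m (X ω))]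
    rw [abs_of_nonneg (mul_nonneg (hL01 ω).1 (sq_nonneg _))]
    exact mul_le_one₀ (hL01 ω).2 (sq_nonneg _) h2
  have hiL : Integrable L P := int_of L 1 hL (fun ω => by
    rcases hLbin ω with h | h <;> simp [h])
  have hiLY : Integrable (fun ω => L ω * Y ω) P :=
    int_of _ 1 (hL.mul hY) hLY1
  have hiLYm2 : Integrable (fun ω => L ω * (Y ω - m (X ω)) ^ 2) P :=
    int_of _ 1 (by fun_prop) hLYm
  have hf3meas : Measurable f3 := by rw [hf3_def]; fun_prop
  have hf3mmeas : Measurable (fun x => f3 x * m x) := hf3meas.mul hmm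
  have hf3mb : ∀ x, |f3 x * m x| ≤ 1 / (ε * (1 - ρ)) := by
    intro x
    rw [abs_mul]
    calc |f3 x| * |m x| ≤ (1 / (ε * (1 - ρ))) * 1 :=
          mul_le_mul (hf3b x) (abs_le.mpr ⟨by linarith [(hmrange x).1],
            (hmrange x).2⟩) (abs_nonneg _) (by positivity)
      _ = _ := mul_one _
  have hi1 : Integrable (fun ω => f3 (X ω) * (L ω * Y ω)) P := by
    refine int_of _ (1 / (ε * (1 - ρ)) * 1) (by fun_prop) fun ω => ?_
    rw [abs_mul]
    exact mul_le_mul (hf3b _) (hLY1 ω) (abs_nonneg _) (by positivity)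
  have hi2 : Integrable (fun ω => (f3 (X ω) * m (X ω)) * L ω) P := by
    refine int_of _ (1 / (ε * (1 - ρ)) * 1) (by fun_prop) fun ω => ?_
    rw [abs_mul]
    exact mul_le_mul (hf3mb _) (by rcases hLbin ω with h | h <;> simp [h])
      (abs_nonneg _) (by positivity)
  have hi3 : Integrable (fun ω => (1 - L ω) * (m (X ω) - θ)) P := by
    refine int_of _ (1 * (1 + |θ|)) (by fun_prop) fun ω => ?_
    rw [abs_mul]
    exact mul_le_mul (by rcases hLbin ω with h | h <;> simp [h]) (hmθ (X ω))
      (abs_nonneg _) zero_le_one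
  have hmean : ∫ ω, lam ω ∂P = 0 := by
    have hpt : ∀ ω, lam ω = f3 (X ω) * (L ω * Y ω) - (f3 (X ω) * m (X ω)) * L ω
        + (1 / (1 - ρ)) * ((1 - L ω) * (m (X ω) - θ)) := by
      intro ω
      rw [hlam_def, hf3_def]
      have hgne : g (X ω) ≠ 0 := (hgx (X ω)).ne'
      have hρne : (1 - ρ) ≠ 0 := h1ρ.ne'
      field_simp
    have e1 : ∫ ω, f3 (X ω) * (L ω * Y ω) ∂P
        = ∫ ω, f3 (X ω) * (g (X ω) * m (X ω)) ∂P :=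
      key_pullout (k := fun x => g x * m x) hX hf3meas hiLY hi1 hmcond
    have e2 : ∫ ω, (fun x => f3 x * m x) (X ω) * L ω ∂P
        = ∫ ω, (fun x => f3 x * m x) (X ω) * g (X ω) ∂P :=
      key_pullout (k := g) hX hf3mmeas hiL hi2 hgcond
    have e12 : ∫ ω, f3 (X ω) * (g (X ω) * m (X ω)) ∂P
        = ∫ ω, (fun x => f3 x * m x) (X ω) * g (X ω) ∂P :=
      integral_congr_ae (ae_of_all _ fun ω => by simp only []; ring)
    have hset : MeasurableSet {ω | L ω = 0} := hL (measurableSet_singleton 0)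
    have e3 : ∫ ω, (1 - L ω) * (m (X ω) - θ) ∂P = 0 := by
      have hind : ∀ ω, (1 - L ω) * (m (X ω) - θ)
          = Set.indicator {ω | L ω = 0} (fun ω => m (X ω) - θ) ω := by
        intro ω
        rcases hLbin ω with h | h <;> simp [Set.indicator_apply, h]
      have himX : Integrable (fun ω => m (X ω)) P := by
        refine int_of _ 1 (hmm.comp hX) fun ω => abs_le.mpr
          ⟨by linarith [(hmrange (X ω)).1], (hmrange (X ω)).2⟩
      calc ∫ ω, (1 - L ω) * (m (X ω) - θ) ∂P
          = ∫ ω, Set.indicator {ω | L ω = 0} (fun ω => m (X ω) - θ) ω ∂P :=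
            integral_congr_ae (ae_of_all _ hind)
        _ = ∫ ω in {ω | L ω = 0}, (m (X ω) - θ) ∂P := integral_indicator hset
        _ = (∫ ω in {ω | L ω = 0}, m (X ω) ∂P) - ∫ ω in {ω | L ω = 0}, θ ∂P :=
            integral_sub himX.integrableOn (integrable_const θ)
        _ = (∫ ω in {ω | L ω = 0}, m (X ω) ∂P) - (P {ω | L ω = 0}).toReal * θ := by
            rw [setIntegral_const, smul_eq_mul]; rfl
        _ = 0 := by rw [← hθ]; ring
    calc ∫ ω, lam ω ∂P
        = ∫ ω, (f3 (X ω) * (L ω * Y ω) - (f3 (X ω) * m (X ω)) * L ω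
            + (1 / (1 - ρ)) * ((1 - L ω) * (m (X ω) - θ))) ∂P :=
          integral_congr_ae (ae_of_all _ hpt)
      _ = (∫ ω, (f3 (X ω) * (L ω * Y ω) - (f3 (X ω) * m (X ω)) * L ω) ∂P)
            + ∫ ω, (1 / (1 - ρ)) * ((1 - L ω) * (m (X ω) - θ)) ∂P :=
          integral_add (hi1.sub hi2) (hi3.const_mul _)
      _ = (∫ ω, f3 (X ω) * (L ω * Y ω) ∂P) - (∫ ω, (f3 (X ω) * m (X ω)) * L ω ∂P)
            + (1 / (1 - ρ)) * ∫ ω, (1 - L ω) * (m (X ω) - θ) ∂P := by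
          rw [integral_sub hi1 hi2, integral_const_mul]
      _ = 0 := by rw [e1, e2, e12, e3]; ring
  -- variance as second moment
  have hmem : MemLp lam 2 P :=
    MemLp.of_bound hmlam.aestronglyMeasurable _
      (ae_of_all _ fun ω => by simpa [Real.norm_eq_abs] using hlamb ω)
  have hvar : variance lam P = ∫ ω, lam ω ^ 2 ∂P := by
    rw [variance_eq_sub hmem, hmean]
    simp [Pi.pow_apply]
  -- second moment computation
  have hsq : ∀ ω, lam ω ^ 2
      = c1 (X ω) * (L ω * (Y ω - m (X ω)) ^ 2) + c2 (X ω) * (1 - L ω) := by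
    intro ω
    have hgne : g (X ω) ≠ 0 := (hgx (X ω)).ne'
    have hρne : (1 - ρ) ≠ 0 := h1ρ.ne'
    rcases hLbin ω with h | h <;>
      · rw [hlam_def, hc1_def, hc2_def]; simp only [h]; field_simp; try ring
  have hmain : ∫ ω, lam ω ^ 2 ∂P
      = ∫ ω, ((1 - g (X ω)) / (1 - ρ) ^ 2)
          * (((1 - g (X ω)) / g (X ω)) * σ2 (X ω) + (m (X ω) - θ) ^ 2) ∂P := by
    have hc1meas : Measurable c1 := by rw [hc1_def]; fun_prop
    have hc2meas : Measurable c2 := by rw [hc2_def]; fun_prop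
    -- a.e. bound on g·σ2 ∘ X
    have hgs_bdd : ∀ᵐ ω ∂P, |g (X ω) * σ2 (X ω)| ≤ 1 := by
      set mX := MeasurableSpace.comap X inferInstance with hmX
      have hm : mX ≤ _ := hX.comap_le
      haveI : SigmaFinite (P.trim hm) := by
        have : IsFiniteMeasure (P.trim hm) := isFiniteMeasure_trim hm
        infer_instance
      have h0 : 0 ≤ᵐ[P] P[(fun ω => L ω * (Y ω - m (X ω)) ^ 2) | mX] :=
        condExp_nonneg (ae_of_all _ fun ω => mul_nonneg (hL01 ω).1 (sq_nonneg _))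
      have h1 : P[(fun ω => L ω * (Y ω - m (X ω)) ^ 2) | mX] ≤ᵐ[P]
          P[(fun _ => (1:ℝ)) | mX] :=
        condExp_mono hiLYm2 (integrable_const 1)
          (ae_of_all _ fun ω => (abs_le.mp (hLYm ω)).2)
      rw [condExp_const hm (1:ℝ)] at h1
      filter_upwards [h0, h1, hσcond] with ω hω0 hω1 hωσ
      rw [← hωσ, abs_of_nonneg hω0]
      exact hω1
    have hi_sq1 : Integrable (fun ω => c1 (X ω) * (L ω * (Y ω - m (X ω)) ^ 2)) P := by
      refine int_of _ ((1 / ε) ^ 2 / (1 - ρ) ^ 2 * 1) (by fun_prop) fun ω => ?_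
      rw [abs_mul]
      exact mul_le_mul (hc1b _) (hLYm ω) (abs_nonneg _) (by positivity)
    have hi_sq2 : Integrable (fun ω => c2 (X ω) * (1 - L ω)) P := by
      refine int_of _ ((1 + |θ|) ^ 2 / (1 - ρ) ^ 2 * 1) (by fun_prop) fun ω => ?_
      rw [abs_mul]
      exact mul_le_mul (hc2b _) (by rcases hLbin ω with h | h <;> simp [h])
        (abs_nonneg _) (by positivity)
    have hi_c2 : Integrable (fun ω => c2 (X ω)) P :=
      int_of _ ((1 + |θ|) ^ 2 / (1 - ρ) ^ 2) (hc2meas.comp hX) fun ω => hc2b _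
    have hi_c2L : Integrable (fun ω => c2 (X ω) * L ω) P := by
      refine int_of _ ((1 + |θ|) ^ 2 / (1 - ρ) ^ 2 * 1) (by fun_prop) fun ω => ?_
      rw [abs_mul]
      exact mul_le_mul (hc2b _) (by rcases hLbin ω with h | h <;> simp [h])
        (abs_nonneg _) (by positivity)
    have hi_c2g : Integrable (fun ω => c2 (X ω) * g (X ω)) P := by
      refine int_of _ ((1 + |θ|) ^ 2 / (1 - ρ) ^ 2 * 1) (by fun_prop) fun ω => ?_
      rw [abs_mul]
      refine mul_le_mul (hc2b _) ?_ (abs_nonneg _) (by positivity)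
      rw [abs_of_pos (hgx (X ω))]
      exact (hgrange (X ω)).2
    have hi_13 : Integrable (fun ω => c1 (X ω) * (g (X ω) * σ2 (X ω))) P := by
      refine integrable_of_abs_bound (by fun_prop : Measurable _).aestronglyMeasurable
        ((1 / ε) ^ 2 / (1 - ρ) ^ 2 * 1) ?_
      filter_upwards [hgs_bdd] with ω hω
      rw [abs_mul]
      exact mul_le_mul (hc1b _) hω (abs_nonneg _) (by positivity)
    have e1 : ∫ ω, c1 (X ω) * (L ω * (Y ω - m (X ω)) ^ 2) ∂P
        = ∫ ω, c1 (X ω) * (g (X ω) * σ2 (X ω)) ∂P :=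
      key_pullout (k := fun x => g x * σ2 x) hX hc1meas hiLYm2 hi_sq1 hσcond
    have e2 : ∫ ω, c2 (X ω) * L ω ∂P = ∫ ω, c2 (X ω) * g (X ω) ∂P :=
      key_pullout (k := g) hX hc2meas hiL hi_c2L hgcond
    calc ∫ ω, lam ω ^ 2 ∂P
        = ∫ ω, (c1 (X ω) * (L ω * (Y ω - m (X ω)) ^ 2) + c2 (X ω) * (1 - L ω)) ∂P :=
          integral_congr_ae (ae_of_all _ hsq)
      _ = (∫ ω, c1 (X ω) * (L ω * (Y ω - m (X ω)) ^ 2) ∂P)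
            + ∫ ω, c2 (X ω) * (1 - L ω) ∂P := integral_add hi_sq1 hi_sq2
      _ = (∫ ω, c1 (X ω) * (g (X ω) * σ2 (X ω)) ∂P)
            + ((∫ ω, c2 (X ω) ∂P) - ∫ ω, c2 (X ω) * L ω ∂P) := by
          rw [e1]
          congr 1
          simp_rw [mul_sub, mul_one]
          exact integral_sub hi_c2 hi_c2L
      _ = (∫ ω, c1 (X ω) * (g (X ω) * σ2 (X ω)) ∂P)
            + ∫ ω, (c2 (X ω) - c2 (X ω) * g (X ω)) ∂P := by
          rw [e2, integral_sub hi_c2 hi_c2g]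
      _ = ∫ ω, (c1 (X ω) * (g (X ω) * σ2 (X ω)) + (c2 (X ω) - c2 (X ω) * g (X ω))) ∂P :=
          (integral_add hi_13 (hi_c2.sub hi_c2g)).symm
      _ = _ := by
          refine integral_congr_ae (ae_of_all _ fun ω => ?_)
          have hgne : g (X ω) ≠ 0 := (hgx (X ω)).ne'
          have hρne : (1 - ρ) ≠ 0 := h1ρ.ne'
          rw [hc1_def, hc2_def]
          field_simp
  rw [hvar, hmain]
end

section
/- Double-robustness identity: given θ = E[(1-g(X))m(X)]/(1-ρ) and exchangeability, if either g* = g or m* = m (but not necessarily both), then E[ (L/g*(X))·((1-g*(X))/(1-ρ))·(Y-m*(X)) + ((1-L)/(1-ρ))·(m*(X)-θ) ] = 0. -/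
open MeasureTheory ProbabilityTheory

/-- Bounded measurable functions on a finite measure space are integrable. -/
lemma bdd_integrable {Ω : Type*} [MeasurableSpace Ω] (P : Measure Ω) [IsFiniteMeasure P]
    {f : Ω → ℝ} (hf : Measurable f) (C : ℝ) (h : ∀ ω, |f ω| ≤ C) : Integrable f P :=
  (MemLp.of_bound hf.aestronglyMeasurable C (Filter.Eventually.of_forall h)).integrable le_rfl

/-- Conditioning swap: `∫ f(X)·h = ∫ f(X)·k(X)` when `E[h | σ(X)] = k(X)` a.e. -/
lemma key_swap {Ω 𝒳 : Type*} [MeasurableSpace Ω] [MeasurableSpace 𝒳]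
    (P : Measure Ω) [IsProbabilityMeasure P] (X : Ω → 𝒳) (hX : Measurable X)
    {h : Ω → ℝ} {k f : 𝒳 → ℝ} (hh : Measurable h) (hk : Measurable k) (hf : Measurable f)
    (Ch Cf : ℝ) (hhb : ∀ ω, |h ω| ≤ Ch) (hfb : ∀ x, |f x| ≤ Cf)
    (hcond : P[h | MeasurableSpace.comap X inferInstance] =ᵐ[P] fun ω => k (X ω)) :
    ∫ ω, f (X ω) * h ω ∂P = ∫ ω, f (X ω) * k (X ω) ∂P := by
  have hm' : MeasurableSpace.comap X inferInstance ≤ _ := hX.comap_le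
  have hXm' : @Measurable Ω 𝒳 (MeasurableSpace.comap X inferInstance) _ X :=
    fun s hs => ⟨s, hs, rfl⟩
  have hfX : StronglyMeasurable[MeasurableSpace.comap X inferInstance] (fun ω => f (X ω)) :=
    (hf.comp hXm').stronglyMeasurable
  have hint_h : Integrable h P := bdd_integrable P hh Ch hhb
  have hint_fh : Integrable ((fun ω => f (X ω)) * h) P := by
    refine bdd_integrable P ((hf.comp hX).mul hh) (Cf * Ch) fun ω => ?_
    rw [Pi.mul_apply, abs_mul]
    exact mul_le_mul (hfb _) (hhb _) (abs_nonneg _) ((abs_nonneg (f (X ω))).trans (hfb (X ω)))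
  have h1 : P[(fun ω => f (X ω)) * h | MeasurableSpace.comap X inferInstance]
      =ᵐ[P] (fun ω => f (X ω)) * P[h | MeasurableSpace.comap X inferInstance] :=
    condExp_mul_of_stronglyMeasurable_left hfX hint_fh hint_h
  have h2 : P[(fun ω => f (X ω)) * h | MeasurableSpace.comap X inferInstance]
      =ᵐ[P] fun ω => f (X ω) * k (X ω) := by
    filter_upwards [h1, hcond] with ω h1ω h2ω
    simp only [Pi.mul_apply] at h1ω ⊢
    rw [h1ω, h2ω]
  calc ∫ ω, f (X ω) * h ω ∂P = ∫ ω, ((fun ω => f (X ω)) * h) ω ∂P := rfl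
    _ = ∫ ω, (P[(fun ω => f (X ω)) * h | MeasurableSpace.comap X inferInstance]) ω ∂P :=
        (integral_condExp hm').symm
    _ = ∫ ω, f (X ω) * k (X ω) ∂P := integral_congr_ae h2

/-- Double-robustness identity: with `θ = E[(1-g(X))m(X)]/(1-ρ)` and the conditional
structure `E[L | σ(X)] = g(X)`, `E[LY | σ(X)] = g(X)m(X)` a.s. (encoding
`Y | X, L=1 ~ Bernoulli(m(X))`, `L | X ~ Bernoulli(g(X))` and exchangeability),
if either `g* = g` a.s. or `m* = m` a.s. (but not necessarily both), then
`E[(L/g*(X))·((1-g*(X))/(1-ρ))·(Y-m*(X)) + ((1-L)/(1-ρ))·(m*(X)-θ)] = 0`. -/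
theorem double_robustness
    {Ω 𝒳 : Type*} [MeasurableSpace Ω] [MeasurableSpace 𝒳]
    (P : Measure Ω) [IsProbabilityMeasure P]
    (X : Ω → 𝒳) (L Y : Ω → ℝ) (g m gs ms : 𝒳 → ℝ)
    (hX : Measurable X) (hL : Measurable L) (hYm : Measurable Y)
    (hg : Measurable g) (hmm : Measurable m) (hgs : Measurable gs) (hms : Measurable ms)
    (hLbin : ∀ ω, L ω = 0 ∨ L ω = 1) (hYbin : ∀ ω, Y ω = 0 ∨ Y ω = 1)
    (ε : ℝ) (hε : 0 < ε)
    (hgrange : ∀ x, ε ≤ g x ∧ g x ≤ 1) (hmrange : ∀ x, 0 ≤ m x ∧ m x ≤ 1)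
    (hgsrange : ∀ x, ε ≤ gs x ∧ gs x ≤ 1) (hmsrange : ∀ x, 0 ≤ ms x ∧ ms x ≤ 1)
    (hgcond : P[L | MeasurableSpace.comap X inferInstance] =ᵐ[P] fun ω => g (X ω))
    (hmcond : P[(fun ω => L ω * Y ω) | MeasurableSpace.comap X inferInstance]
        =ᵐ[P] fun ω => g (X ω) * m (X ω))
    (ρ : ℝ) (hρ : ρ = (P {ω | L ω = 1}).toReal) (hρ0 : 0 < ρ) (hρ1 : ρ < 1)
    (θ : ℝ) (hθ : θ = (∫ ω, (1 - g (X ω)) * m (X ω) ∂P) / (1 - ρ))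
    (hdr : (∀ᵐ ω ∂P, gs (X ω) = g (X ω)) ∨ (∀ᵐ ω ∂P, ms (X ω) = m (X ω))) :
    ∫ ω, (L ω / gs (X ω)) * ((1 - gs (X ω)) / (1 - ρ)) * (Y ω - ms (X ω))
        + ((1 - L ω) / (1 - ρ)) * (ms (X ω) - θ) ∂P = 0 := by
  have hρne : (1 : ℝ) - ρ ≠ 0 := by linarith
  have hgs0 : ∀ x, (0:ℝ) < gs x := fun x => lt_of_lt_of_le hε (hgsrange x).1
  have hgsne : ∀ x, gs x ≠ 0 := fun x => (hgs0 x).ne'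
  -- bounds on L, Y
  have hLb : ∀ ω, |L ω| ≤ 1 := by
    intro ω; rcases hLbin ω with h | h <;> rw [h] <;> norm_num
  have hYb : ∀ ω, |Y ω| ≤ 1 := by
    intro ω; rcases hYbin ω with h | h <;> rw [h] <;> norm_num
  have hLYb : ∀ ω, |L ω * Y ω| ≤ 1 := by
    intro ω; rw [abs_mul]
    exact mul_le_one₀ (hLb ω) (abs_nonneg _) (hYb ω)
  have hmsb : ∀ x, |ms x| ≤ 1 := fun x =>
    abs_le.mpr ⟨by linarith [(hmsrange x).1], (hmsrange x).2⟩
  have hmb : ∀ x, |m x| ≤ 1 := fun x =>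
    abs_le.mpr ⟨by linarith [(hmrange x).1], (hmrange x).2⟩
  have hgb : ∀ x, |g x| ≤ 1 := fun x =>
    abs_le.mpr ⟨by linarith [hε.le.trans (hgrange x).1], (hgrange x).2⟩
  -- the three 𝒳-level functions
  set f1 : 𝒳 → ℝ := fun x => (1 - gs x) / gs x with hf1def
  set f2 : 𝒳 → ℝ := fun x => -((1 - gs x) / gs x * ms x) - (ms x - θ) with hf2def
  set f3 : 𝒳 → ℝ := fun x => ms x - θ with hf3def
  have hf1m : Measurable f1 := (measurable_const.sub hgs).div hgs
  have hf2m : Measurable f2 := ((hf1m.mul hms).neg).sub (hms.sub measurable_const)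
  have hf3m : Measurable f3 := hms.sub measurable_const
  have hf1b : ∀ x, |f1 x| ≤ 1 / ε := by
    intro x
    rw [hf1def, abs_div]
    refine div_le_div₀ (by norm_num) ?_ hε ?_
    · rw [abs_le]
      exact ⟨by linarith [(hgsrange x).2], by linarith [hgs0 x]⟩
    · rw [abs_of_pos (hgs0 x)]; exact (hgsrange x).1
  have hf3b : ∀ x, |f3 x| ≤ 1 + |θ| := by
    intro x
    calc |f3 x| ≤ |ms x| + |θ| := abs_sub _ _
      _ ≤ 1 + |θ| := by linarith [hmsb x]
  have hf2b : ∀ x, |f2 x| ≤ 1 / ε + (1 + |θ|) := by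
    intro x
    have h1 : |(1 - gs x) / gs x * ms x| ≤ 1 / ε := by
      rw [abs_mul]
      calc |(1 - gs x) / gs x| * |ms x| ≤ (1/ε) * 1 :=
            mul_le_mul (hf1b x) (hmsb x) (abs_nonneg _) (by positivity)
        _ = 1 / ε := mul_one _
    calc |f2 x| ≤ |-((1 - gs x) / gs x * ms x)| + |ms x - θ| := abs_sub _ _
      _ ≤ 1 / ε + (1 + |θ|) := by rw [abs_neg]; exact add_le_add h1 (hf3b x)
  -- integrability helpers
  have intX : ∀ (u : 𝒳 → ℝ), Measurable u → ∀ C, (∀ x, |u x| ≤ C) →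
      Integrable (fun ω => u (X ω)) P := fun u hu C hC =>
    bdd_integrable P (hu.comp hX) C fun ω => hC (X ω)
  have intmul : ∀ (u : 𝒳 → ℝ), Measurable u → ∀ C, (∀ x, |u x| ≤ C) →
      ∀ (h : Ω → ℝ), Measurable h → (∀ ω, |h ω| ≤ 1) →
      Integrable (fun ω => u (X ω) * h ω) P := by
    intro u hu C hC h hh hhb
    refine bdd_integrable P ((hu.comp hX).mul hh) (C * 1) fun ω => ?_
    rw [abs_mul]
    exact mul_le_mul (hC _) (hhb _) (abs_nonneg _) ((abs_nonneg (u (X ω))).trans (hC (X ω)))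
  -- step 1: rewrite integrand
  have hstep1 : ∀ ω, (L ω / gs (X ω)) * ((1 - gs (X ω)) / (1 - ρ)) * (Y ω - ms (X ω))
        + ((1 - L ω) / (1 - ρ)) * (ms (X ω) - θ)
      = (1 - ρ)⁻¹ * (f1 (X ω) * (L ω * Y ω) + f2 (X ω) * L ω + f3 (X ω)) := by
    intro ω
    simp only [hf1def, hf2def, hf3def]
    field_simp [hgsne (X ω), hρne]
    ring
  simp_rw [hstep1, integral_const_mul]
  -- basic expectations
  have hEL : ∫ ω, L ω ∂P = ρ := by
    have hLeq : L = ({ω | L ω = 1}).indicator (fun _ => (1:ℝ)) := by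
      funext ω
      rcases hLbin ω with h | h
      · rw [h, Set.indicator_of_notMem]
        simp [Set.mem_setOf_eq, h]
      · rw [h, Set.indicator_of_mem]
        exact h
    have hmeas : MeasurableSet {ω | L ω = 1} := hL (measurableSet_singleton 1)
    rw [hLeq, integral_indicator_const (1:ℝ) hmeas, hρ, smul_eq_mul, mul_one, measureReal_def]
  have hEg : ∫ ω, g (X ω) ∂P = ρ := by
    have := key_swap P X hX (f := fun _ => (1:ℝ)) hL hg measurable_const 1 1 hLb
      (fun _ => by norm_num) hgcond
    simp only [one_mul] at this
    rw [← this, hEL]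
  have hE1g : ∫ ω, (1 - g (X ω)) ∂P = 1 - ρ := by
    rw [integral_sub (integrable_const 1) (intX g hg 1 hgb), hEg]
    simp
  have hθ' : ∫ ω, (1 - g (X ω)) * m (X ω) ∂P = θ * (1 - ρ) := by
    rw [hθ]; field_simp
  -- conditioning swaps
  have hI1 : ∫ ω, f1 (X ω) * (L ω * Y ω) ∂P
      = ∫ ω, f1 (X ω) * (g (X ω) * m (X ω)) ∂P :=
    key_swap P X hX (hL.mul hYm) (hg.mul hmm) hf1m 1 (1/ε) hLYb hf1b hmcond
  have hI2 : ∫ ω, f2 (X ω) * L ω ∂P = ∫ ω, f2 (X ω) * g (X ω) ∂P :=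
    key_swap P X hX hL hg hf2m 1 (1/ε + (1 + |θ|)) hLb hf2b hgcond
  -- integrability of the pieces
  have int1 : Integrable (fun ω => f1 (X ω) * (L ω * Y ω)) P :=
    intmul f1 hf1m (1/ε) hf1b (fun ω => L ω * Y ω) (hL.mul hYm) hLYb
  have int2 : Integrable (fun ω => f2 (X ω) * L ω) P :=
    intmul f2 hf2m (1/ε + (1 + |θ|)) hf2b L hL hLb
  have int3 : Integrable (fun ω => f3 (X ω)) P := intX f3 hf3m (1 + |θ|) hf3b
  have int1' : Integrable (fun ω => f1 (X ω) * (g (X ω) * m (X ω))) P := by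
    refine intmul f1 hf1m (1/ε) hf1b (fun ω => g (X ω) * m (X ω))
      ((hg.comp hX).mul (hmm.comp hX)) fun ω => ?_
    rw [abs_mul]
    exact mul_le_one₀ (hgb _) (abs_nonneg _) (hmb _)
  have int2' : Integrable (fun ω => f2 (X ω) * g (X ω)) P :=
    intmul f2 hf2m (1/ε + (1 + |θ|)) hf2b (fun ω => g (X ω)) (hg.comp hX)
      fun ω => hgb _
  -- algebraic identity at the 𝒳 level
  have hpt : ∀ x, f1 x * (g x * m x) + f2 x * g x + f3 x
      = (m x - ms x) * (g x - gs x) / gs x + ((1 - g x) * m x - θ * (1 - g x)) := by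
    intro x
    simp only [hf1def, hf2def, hf3def]
    field_simp [hgsne x]
    ring
  -- bound and vanishing of B
  have hBb : ∀ x, |(m x - ms x) * (g x - gs x) / gs x| ≤ 1 / ε := by
    intro x
    rw [abs_div]
    refine div_le_div₀ (by norm_num) ?_ hε ?_
    · rw [abs_mul]
      refine mul_le_one₀ ?_ (abs_nonneg _) ?_
      · exact abs_le.mpr ⟨by linarith [(hmrange x).1, (hmsrange x).2],
          by linarith [(hmrange x).2, (hmsrange x).1]⟩
      · exact abs_le.mpr ⟨by linarith [hε.le.trans (hgrange x).1, (hgsrange x).2],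
          by linarith [(hgrange x).2, hε.le.trans (hgsrange x).1]⟩
    · rw [abs_of_pos (hgs0 x)]; exact (hgsrange x).1
  have intB : Integrable (fun ω => (m (X ω) - ms (X ω)) * (g (X ω) - gs (X ω)) / gs (X ω)) P :=
    intX _ (((hmm.sub hms).mul (hg.sub hgs)).div hgs) (1/ε) hBb
  have hB0 : ∫ ω, (m (X ω) - ms (X ω)) * (g (X ω) - gs (X ω)) / gs (X ω) ∂P = 0 := by
    have hzero : (fun ω => (m (X ω) - ms (X ω)) * (g (X ω) - gs (X ω)) / gs (X ω))
        =ᵐ[P] fun _ => (0:ℝ) := by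
      rcases hdr with h | h <;> filter_upwards [h] with ω hω <;> simp [hω]
    rw [integral_congr_ae hzero, integral_zero]
  -- more integrability
  have intgm : Integrable (fun ω => (1 - g (X ω)) * m (X ω)) P := by
    refine intX (fun x => (1 - g x) * m x) ((measurable_const.sub hg).mul hmm) 1 fun x => ?_
    rw [abs_mul]
    refine mul_le_one₀ ?_ (abs_nonneg _) (hmb x)
    exact abs_le.mpr ⟨by linarith [(hgrange x).2], by linarith [hε.le.trans (hgrange x).1]⟩
  have intg1 : Integrable (fun ω => θ * (1 - g (X ω))) P := by
    refine intX (fun x => θ * (1 - g x)) (measurable_const.mul (measurable_const.sub hg)) (|θ| * 1) fun x => ?_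
    rw [abs_mul]
    refine mul_le_mul le_rfl ?_ (abs_nonneg _) (abs_nonneg _)
    exact abs_le.mpr ⟨by linarith [(hgrange x).2], by linarith [hε.le.trans (hgrange x).1]⟩
  -- put it together
  have int12 : Integrable (fun ω => f1 (X ω) * (L ω * Y ω) + f2 (X ω) * L ω) P :=
    int1.add int2
  have int12' : Integrable (fun ω => f1 (X ω) * (g (X ω) * m (X ω)) + f2 (X ω) * g (X ω)) P :=
    int1'.add int2'
  have intgm_sub : Integrable (fun ω => (1 - g (X ω)) * m (X ω) - θ * (1 - g (X ω))) P :=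
    intgm.sub intg1
  have hS : ∫ ω, f1 (X ω) * (L ω * Y ω) + f2 (X ω) * L ω + f3 (X ω) ∂P = 0 := by
    rw [integral_add int12 int3, integral_add int1 int2, hI1, hI2,
      ← integral_add int1' int2', ← integral_add int12' int3]
    calc ∫ ω, f1 (X ω) * (g (X ω) * m (X ω)) + f2 (X ω) * g (X ω) + f3 (X ω) ∂P
        = ∫ ω, (m (X ω) - ms (X ω)) * (g (X ω) - gs (X ω)) / gs (X ω)
            + ((1 - g (X ω)) * m (X ω) - θ * (1 - g (X ω))) ∂P := by
          exact integral_congr_ae (Filter.Eventually.of_forall fun ω => hpt (X ω))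
      _ = (∫ ω, (m (X ω) - ms (X ω)) * (g (X ω) - gs (X ω)) / gs (X ω) ∂P)
            + ((∫ ω, (1 - g (X ω)) * m (X ω) ∂P) - ∫ ω, θ * (1 - g (X ω)) ∂P) := by
          rw [integral_add intB intgm_sub, integral_sub intgm intg1]
      _ = 0 := by
          rw [hB0, hθ', integral_const_mul, hE1g]
          ring
  rw [hS, mul_zero]
end
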